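/- arXiv:1501.07544 — 2 statements merged into one kernel-verified Lean document; each statement's English description precedes it below -/
import Mathlib

section
/- Let B ⊆ ℝ^n be a subspace. For any I ⊆ J ⊆ [n] and any X ⊆ [n] with dim(S_{I ∪ X^c} ∩ B) = 0, it holds that |I| ≤ |J| − dim(S_{J ∪ X^c} ∩ B). -/
open Finset MeasureTheory

/-- The sparse subspace `S_J ⊆ ℝ^n`: vectors vanishing outside `J`. -/
def sparseSubspace (n : ℕ) (J : Finset (Fin n)) : Submodule ℝ (Fin n → ℝ) where
  carrier := {v | ∀ i, i ∉ J → v i = 0}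
  add_mem' := by intro a b ha hb i hi; simp [ha i hi, hb i hi]
  zero_mem' := by intro i _; rfl
  smul_mem' := by intro c v hv i hi; simp [hv i hi]

theorem Submodule.finrank_le_finrank_inf_ker_add {K V V₂ : Type*} [DivisionRing K]
    [AddCommGroup V] [Module K V] [AddCommGroup V₂] [Module K V₂]
    [FiniteDimensional K V] [FiniteDimensional K V₂] (W : Submodule K V) (f : V →ₗ[K] V₂) :
    Module.finrank K W ≤ Module.finrank K ↥(W ⊓ LinearMap.ker f) + Module.finrank K V₂ := by
  have hker : LinearMap.ker (f.domRestrict W) ≃ₗ[K] ↥(W ⊓ LinearMap.ker f) := by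
    rw [LinearMap.ker_domRestrict, ← Submodule.map_comap_subtype]
    exact W.equivSubtypeMap _
  rw [← (f.domRestrict W).finrank_range_add_finrank_ker, hker.finrank_eq, add_comm]
  exact Nat.add_le_add_left (Submodule.finrank_le _) _

theorem mem_sparseSubspace {n : ℕ} {J : Finset (Fin n)} {v : Fin n → ℝ} :
    v ∈ sparseSubspace n J ↔ ∀ i, i ∉ J → v i = 0 :=
  Iff.rfl

theorem sparseSubspace_mono {n : ℕ} {J J' : Finset (Fin n)} (h : J ⊆ J') :
    sparseSubspace n J ≤ sparseSubspace n J' :=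
  fun _ hv i hi => hv i fun hiJ => hi (h hiJ)

theorem sparseSubspace_inf (n : ℕ) (J J' : Finset (Fin n)) :
    sparseSubspace n J ⊓ sparseSubspace n J' = sparseSubspace n (J ∩ J') := by
  ext v
  simp only [Submodule.mem_inf, mem_sparseSubspace, mem_inter, not_and_or]
  constructor
  · rintro ⟨hJ, hJ'⟩ i (hi | hi)
    exacts [hJ i hi, hJ' i hi]
  · intro hv
    exact ⟨fun i hi => hv i (.inl hi), fun i hi => hv i (.inr hi)⟩

theorem ker_funLeft_subtypeVal {n : ℕ} (D : Finset (Fin n)) :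
    LinearMap.ker (LinearMap.funLeft ℝ ℝ (Subtype.val : D → Fin n)) = sparseSubspace n Dᶜ := by
  ext v
  simp only [LinearMap.mem_ker, mem_sparseSubspace, mem_compl, not_not, funext_iff,
    LinearMap.funLeft_apply, Pi.zero_apply, Subtype.forall]

/-- A vector of `S_L ∩ B` vanishing on `L \ K` already lies in `S_K ∩ B`, so restriction to
`L \ K` loses at most `dim (S_K ∩ B)` dimensions. -/
theorem finrank_sparseSubspace_inf_le {n : ℕ} (B : Submodule ℝ (Fin n → ℝ)) (K L : Finset (Fin n)) :
    Module.finrank ℝ ↥(sparseSubspace n L ⊓ B) ≤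
      Module.finrank ℝ ↥(sparseSubspace n K ⊓ B) + #(L \ K) := by
  have hker : sparseSubspace n L ⊓ B ⊓ LinearMap.ker (LinearMap.funLeft ℝ ℝ
      (Subtype.val : (L \ K : Finset (Fin n)) → Fin n)) ≤ sparseSubspace n K ⊓ B := by
    rw [ker_funLeft_subtypeVal, inf_right_comm, sparseSubspace_inf]
    refine inf_le_inf_right _ (sparseSubspace_mono fun i hi => ?_)
    simp only [mem_inter, mem_compl, mem_sdiff, not_and, not_not] at hi
    exact hi.2 hi.1
  calc Module.finrank ℝ ↥(sparseSubspace n L ⊓ B)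
      ≤ Module.finrank ℝ ↥(sparseSubspace n L ⊓ B ⊓ LinearMap.ker _) +
          Module.finrank ℝ ((L \ K : Finset (Fin n)) → ℝ) :=
        Submodule.finrank_le_finrank_inf_ker_add _ _
    _ ≤ Module.finrank ℝ ↥(sparseSubspace n K ⊓ B) + #(L \ K) := by
        rw [Module.finrank_fintype_fun_eq_card, Fintype.card_coe]
        exact Nat.add_le_add_right (Submodule.finrank_mono hker) _

theorem stmt4 {n : ℕ} (B : Submodule ℝ (Fin n → ℝ)) (I J X : Finset (Fin n))
    (hIJ : I ⊆ J)
    (h : Module.finrank ℝ ↥(sparseSubspace n (I ∪ Xᶜ) ⊓ B) = 0) :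
    (I.card : ℤ) ≤
      (J.card : ℤ) - Module.finrank ℝ ↥(sparseSubspace n (J ∪ Xᶜ) ⊓ B) := by
  have hdim := finrank_sparseSubspace_inf_le B (I ∪ Xᶜ) (J ∪ Xᶜ)
  have hsdiff : #((J ∪ Xᶜ) \ (I ∪ Xᶜ)) ≤ #J - #I := by
    rw [← card_sdiff_of_subset hIJ]
    exact card_le_card fun i => by simp only [mem_sdiff, mem_union]; tauto
  have hcard : #I ≤ #J := card_le_card hIJ
  omega
end

section
/- Let B ⊆ ℝ^n be a subspace, X ⊆ [n] with dim(S_{X^c} ∩ B) = 0, and J ⊆ X. Then there exists K ⊆ J with |K| = |J| − dim(S_{J ∪ X^c} ∩ B) and dim(S_{K ∪ X^c} ∩ B) = 0. -/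
/-!
Removing a coordinate `j` from the support cuts `S_{J ∪ X^c} ∩ B` by the kernel of the
evaluation at `j`, so its dimension drops by one whenever some vector of it is nonzero at `j`.
As long as `S_{J ∪ X^c} ∩ B ≠ 0`, a nonzero vector in it cannot be supported on `X^c` (because
`S_{X^c} ∩ B = 0`), so such a coordinate `j ∈ J` exists. Deleting `d = dim(S_{J ∪ X^c} ∩ B)`
coordinates of `J` in this way leaves the required `K`.
-/

open Finset MeasureTheory

theorem Submodule.finrank_inf_ker_add_one {K V : Type*} [DivisionRing K] [AddCommGroup V]
    [Module K V] {W : Submodule K V} [FiniteDimensional K W] {f : Module.Dual K V}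
    {v : V} (hvW : v ∈ W) (hfv : f v ≠ 0) :
    Module.finrank K ↥(W ⊓ LinearMap.ker f) + 1 = Module.finrank K W := by
  have hf : f.domRestrict W ≠ 0 := fun h => hfv (LinearMap.congr_fun h ⟨v, hvW⟩)
  rw [← Module.Dual.finrank_ker_add_one_of_ne_zero hf, LinearMap.ker_domRestrict,
    ← Submodule.finrank_map_subtype_eq, Submodule.map_comap_subtype]

namespace sparseSubspace

variable {n : ℕ}

theorem mem_iff {J : Finset (Fin n)} {v : Fin n → ℝ} :
    v ∈ sparseSubspace n J ↔ ∀ i, i ∉ J → v i = 0 := Iff.rfl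

theorem erase_eq_inf_ker (J : Finset (Fin n)) (j : Fin n) :
    sparseSubspace n (J.erase j) = sparseSubspace n J ⊓ LinearMap.ker (LinearMap.proj j) := by
  ext v
  simp only [Submodule.mem_inf, LinearMap.mem_ker, LinearMap.coe_proj, Function.eval, mem_iff,
    mem_erase, not_and_or, not_not]
  constructor
  · intro hv
    exact ⟨fun i hi => hv i (.inr hi), hv j (.inl rfl)⟩
  · rintro ⟨hv, hvj⟩ i (rfl | hi)
    exacts [hvj, hv i hi]

theorem exists_mem_finrank_erase_add_one {B : Submodule ℝ (Fin n → ℝ)} {T J : Finset (Fin n)}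
    (hT : sparseSubspace n T ⊓ B = ⊥) (hJ : sparseSubspace n (J ∪ T) ⊓ B ≠ ⊥) :
    ∃ j ∈ J, Module.finrank ℝ ↥(sparseSubspace n (J.erase j ∪ T) ⊓ B) + 1 =
      Module.finrank ℝ ↥(sparseSubspace n (J ∪ T) ⊓ B) := by
  obtain ⟨v, hvW, hv0⟩ := Submodule.exists_mem_ne_zero_of_ne_bot hJ
  obtain ⟨j, hjT, hvj⟩ : ∃ j ∉ T, v j ≠ 0 := by
    by_contra! h
    have hvT : v ∈ sparseSubspace n T ⊓ B := ⟨h, hvW.2⟩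
    exact hv0 (by simpa [hT] using hvT)
  have hjJ : j ∈ J := by
    by_contra hj
    exact hvj (hvW.1 j (by simp [hj, hjT]))
  refine ⟨j, hjJ, ?_⟩
  have hunion : J.erase j ∪ T = (J ∪ T).erase j := by
    rw [erase_union_distrib, erase_eq_of_notMem hjT]
  rw [hunion, erase_eq_inf_ker, inf_right_comm]
  exact Submodule.finrank_inf_ker_add_one (f := LinearMap.proj (R := ℝ) (φ := fun _ => ℝ) j)
    hvW hvj

theorem exists_subset_card_add_finrank_eq {B : Submodule ℝ (Fin n → ℝ)} {T : Finset (Fin n)}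
    (hT : sparseSubspace n T ⊓ B = ⊥) (J : Finset (Fin n)) :
    ∃ K ⊆ J, K.card + Module.finrank ℝ ↥(sparseSubspace n (J ∪ T) ⊓ B) = J.card ∧
      sparseSubspace n (K ∪ T) ⊓ B = ⊥ := by
  obtain ⟨d, hd⟩ : ∃ d, Module.finrank ℝ ↥(sparseSubspace n (J ∪ T) ⊓ B) = d := ⟨_, rfl⟩
  induction d generalizing J with
  | zero => exact ⟨J, subset_rfl, by simp [hd], Submodule.finrank_eq_zero.mp hd⟩
  | succ d ih =>
    have hJ : sparseSubspace n (J ∪ T) ⊓ B ≠ ⊥ := fun h =>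
      d.succ_ne_zero (hd.symm.trans (Submodule.finrank_eq_zero.mpr h))
    obtain ⟨j, hjJ, hj⟩ := exists_mem_finrank_erase_add_one hT hJ
    obtain ⟨K, hKJ, hK, hK0⟩ := ih (J.erase j) (by omega)
    refine ⟨K, hKJ.trans (erase_subset j J), ?_, hK0⟩
    have := card_erase_add_one hjJ
    omega

end sparseSubspace

theorem stmt5_general {n : ℕ} (B : Submodule ℝ (Fin n → ℝ)) (X : Finset (Fin n))
    (hX : Module.finrank ℝ ↥(sparseSubspace n Xᶜ ⊓ B) = 0)
    (J : Finset (Fin n)) :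
    ∃ K ⊆ J, K.card = J.card - Module.finrank ℝ ↥(sparseSubspace n (J ∪ Xᶜ) ⊓ B) ∧
      Module.finrank ℝ ↥(sparseSubspace n (K ∪ Xᶜ) ⊓ B) = 0 := by
  obtain ⟨K, hKJ, hK, hK0⟩ :=
    sparseSubspace.exists_subset_card_add_finrank_eq (Submodule.finrank_eq_zero.mp hX) J
  exact ⟨K, hKJ, by omega, Submodule.finrank_eq_zero.mpr hK0⟩

theorem stmt5 {n : ℕ} (B : Submodule ℝ (Fin n → ℝ)) (X : Finset (Fin n))
    (hX : Module.finrank ℝ ↥(sparseSubspace n Xᶜ ⊓ B) = 0)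
    (J : Finset (Fin n)) (hJ : J ⊆ X) :
    ∃ K ⊆ J, K.card = J.card - Module.finrank ℝ ↥(sparseSubspace n (J ∪ Xᶜ) ⊓ B) ∧
      Module.finrank ℝ ↥(sparseSubspace n (K ∪ Xᶜ) ⊓ B) = 0 :=
  stmt5_general B X hX J
end
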